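/- arXiv:1003.0318 — 3 statements merged into one kernel-verified Lean document; each statement's English description precedes it below -/
import Mathlib

section
/- Let k be a field and f, g : C → D two morphisms of k-coalgebras. Set S := {c ∈ C | f(c) = g(c)} and let E be the sum of all subcoalgebras of C contained in S. Then the pair (E, i), where i : E → C is the canonical inclusion, is an equalizer of f and g in the category of k-coalgebras: f ∘ i = g ∘ i, and for every k-coalgebra E' and coalgebra map h : E' → C with f ∘ h = g ∘ h there is a unique coalgebra map h' : E' → E with i ∘ h' = h. -/
/-!
Over a field every module is flat, so `V ⊗ V → C ⊗ C` is injective for a subspace `V ⊆ C`.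
Hence the comultiplication and counit of `C` restrict to any subcoalgebra, and the coalgebra
axioms there follow from those of `C` after pushing forward along these injections. Sums and
images of coalgebra maps are subcoalgebras, so `E` is a subcoalgebra on which `f = g`, and the
image of any coalgebra map `h` with `f ∘ h = g ∘ h` is a subcoalgebra inside `E`; by the same
injectivity, the corestriction of `h` to `E` is a coalgebra map, unique since `E → C` is
injective.
-/

universe u v w

/-- `V` is a subcoalgebra of the coalgebra `C`: the comultiplication maps `V` into
the image of `V ⊗ V` in `C ⊗ C`. -/
def IsSubcoalgebra {k : Type u} [CommRing k] {C : Type v} [AddCommGroup C] [Module k C]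
    [Coalgebra k C] (V : Submodule k C) : Prop :=
  ∀ v ∈ V, Coalgebra.comul (R := k) v ∈
    LinearMap.range (TensorProduct.map V.subtype V.subtype)

open TensorProduct LinearMap
open Coalgebra (comul counit)

variable {k : Type*} [CommRing k] {A B C : Type*} [AddCommGroup A] [Module k A]
  [AddCommGroup B] [Module k B] [AddCommGroup C] [Module k C]

namespace LinearMap

noncomputable def liftOfRangeLE (i : A →ₗ[k] C) (hi : Function.Injective i) (h : B →ₗ[k] C)
    (hh : range h ≤ range i) : B →ₗ[k] A :=
  (LinearEquiv.ofInjective i hi).symm ∘ₗ h.codRestrict (range i) fun x => hh ⟨x, rfl⟩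

@[simp]
theorem comp_liftOfRangeLE (i : A →ₗ[k] C) (hi : Function.Injective i) (h : B →ₗ[k] C)
    (hh : range h ≤ range i) : i ∘ₗ i.liftOfRangeLE hi h hh = h := by
  ext x
  simp [liftOfRangeLE]

end LinearMap

protected noncomputable abbrev Function.Injective.coalgebra [Coalgebra k C]
    [CoalgebraStruct k A] [Module.Flat k A] [Module.Flat k C] (i : A →ₗ[k] C)
    (hi : Function.Injective i) (hcomul : map i i ∘ₗ comul = comul ∘ₗ i)
    (hcounit : counit ∘ₗ i = counit) : Coalgebra k A where
  coassoc := by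
    have hii : Function.Injective (map i i) := map_injective_of_flat_flat _ _ hi hi
    rw [← cancel_left (map_injective_of_flat_flat i (map i i) hi hii)]
    calc _ = TensorProduct.assoc k C C C ∘ₗ comul.rTensor C ∘ₗ comul ∘ₗ i := by
          rw [← LinearMap.comp_assoc, map_map_comp_assoc_eq, LinearMap.comp_assoc,
            ← LinearMap.comp_assoc _ (rTensor _ _), map_comp_rTensor, hcomul,
            ← rTensor_comp_map, LinearMap.comp_assoc, hcomul]
      _ = comul.lTensor C ∘ₗ comul ∘ₗ i := by
          simpa only [LinearMap.comp_assoc] using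
            congrArg (· ∘ₗ i) (Coalgebra.coassoc (R := k) (A := C))
      _ = _ := by
          rw [← LinearMap.comp_assoc _ _ (map i (map i i)), map_comp_lTensor, hcomul,
            ← lTensor_comp_map, LinearMap.comp_assoc, hcomul]
  rTensor_counit_comp_comul := by
    rw [← cancel_left (Module.Flat.lTensor_preserves_injective_linearMap (M := k) i hi),
      ← hcounit, ← LinearMap.comp_assoc, lTensor_comp_rTensor, ← rTensor_comp_map,
      LinearMap.comp_assoc, hcomul, ← LinearMap.comp_assoc, Coalgebra.rTensor_counit_comp_comul]
    ext; simp
  lTensor_counit_comp_comul := by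
    rw [← cancel_left (Module.Flat.rTensor_preserves_injective_linearMap (M := k) i hi),
      ← hcounit, ← LinearMap.comp_assoc, rTensor_comp_lTensor, ← lTensor_comp_map,
      LinearMap.comp_assoc, hcomul, ← LinearMap.comp_assoc, Coalgebra.lTensor_counit_comp_comul]
    ext; simp

theorem CoalgHom.existsUnique_comp_eq_of_injective [Coalgebra k A] [Coalgebra k B]
    [Coalgebra k C] [Module.Flat k A] [Module.Flat k C] (i : A →ₗc[k] C)
    (hi : Function.Injective i) (h : B →ₗc[k] C)
    (hh : range h.toLinearMap ≤ range i.toLinearMap) :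
    ∃! h' : B →ₗc[k] A, i.comp h' = h := by
  set h' := i.toLinearMap.liftOfRangeLE hi h.toLinearMap hh
  have hih' : i.toLinearMap ∘ₗ h' = h.toLinearMap := comp_liftOfRangeLE ..
  refine ⟨⟨h', ?_, ?_⟩, ?_, fun h'' hh'' => ?_⟩
  · rw [← i.counit_comp, LinearMap.comp_assoc, hih', h.counit_comp]
  · rw [← cancel_left (map_injective_of_flat_flat _ _ hi hi), ← LinearMap.comp_assoc,
      ← map_comp, hih', h.map_comp_comul, ← hih', ← LinearMap.comp_assoc, ← i.map_comp_comul,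
      LinearMap.comp_assoc]
  · exact CoalgHom.coe_linearMap_injective hih'
  · ext x
    apply hi
    rw [← CoalgHom.comp_apply, hh'']
    exact (LinearMap.congr_fun hih' x).symm

theorem isSubcoalgebra_sSup [Coalgebra k C] {S : Set (Submodule k C)}
    (hS : ∀ V ∈ S, IsSubcoalgebra V) : IsSubcoalgebra (sSup S) := by
  have hle : sSup S ≤ (range (map (sSup S).subtype (sSup S).subtype)).comap comul := by
    refine sSup_le fun V hV x hx => ?_
    obtain ⟨t, ht⟩ := hS V hV x hx
    have hVS : V ≤ sSup S := le_sSup hV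
    exact ⟨map (Submodule.inclusion hVS) (Submodule.inclusion hVS) t, by rw [map_map, ← ht]; rfl⟩
  exact fun v hv => hle hv

theorem CoalgHom.isSubcoalgebra_range [Coalgebra k B] [Coalgebra k C] (h : B →ₗc[k] C) :
    IsSubcoalgebra (range h.toLinearMap) := by
  rintro _ ⟨x, rfl⟩
  refine ⟨map h.toLinearMap.rangeRestrict h.toLinearMap.rangeRestrict (comul x), ?_⟩
  rw [map_map, subtype_comp_codRestrict]
  exact CoalgHomClass.map_comp_comul_apply h x

namespace IsSubcoalgebra

variable [Coalgebra k C] [Module.Flat k C] {V : Submodule k C} [Module.Flat k V]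

protected noncomputable abbrev coalgebra (hV : IsSubcoalgebra V) : Coalgebra k V :=
  letI : CoalgebraStruct k V :=
    { comul := (map V.subtype V.subtype).liftOfRangeLE
        (map_injective_of_flat_flat _ _ V.injective_subtype V.injective_subtype)
        (comul ∘ₗ V.subtype) (by rintro _ ⟨v, rfl⟩; exact hV v v.2)
      counit := counit ∘ₗ V.subtype }
  V.injective_subtype.coalgebra V.subtype (comp_liftOfRangeLE ..) rfl

theorem exists_coalgHom_subtype (hV : IsSubcoalgebra V) :
    ∃ (_ : Coalgebra k V) (i : V →ₗc[k] C), i.toLinearMap = V.subtype :=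
  letI := hV.coalgebra
  ⟨_, ⟨V.subtype, rfl, comp_liftOfRangeLE ..⟩, rfl⟩

end IsSubcoalgebra

/-- Let `f, g : C → D` be two coalgebra maps and let `E` be the sum of all subcoalgebras
of `C` contained in `S = {c | f c = g c}`.  Then `E` carries a coalgebra structure for
which the inclusion `i : E → C` is a coalgebra map, `f ∘ i = g ∘ i`, and for every
coalgebra `E'` and every coalgebra map `h : E' → C` with `f ∘ h = g ∘ h` there is a
unique coalgebra map `h' : E' → E` with `i ∘ h' = h`; that is, `(E, i)` is an equalizer
of `f` and `g` in the category of `k`-coalgebras. -/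
theorem sum_of_subcoalgebras_is_equalizer {k : Type u} [Field k] {C D : Type v}
    [AddCommGroup C] [Module k C] [Coalgebra k C]
    [AddCommGroup D] [Module k D] [Coalgebra k D]
    (f g : C →ₗc[k] D) (E : Submodule k C)
    (hE : E = sSup {V : Submodule k C |
      IsSubcoalgebra V ∧ V ≤ LinearMap.ker (f.toLinearMap - g.toLinearMap)}) :
    ∃ _inst : Coalgebra k ↥E, ∃ i : ↥E →ₗc[k] C,
      i.toLinearMap = E.subtype ∧
      f.comp i = g.comp i ∧
      ∀ (E' : Type w) [AddCommGroup E'] [Module k E'] [Coalgebra k E'] (h : E' →ₗc[k] C),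
        f.comp h = g.comp h → ∃! h' : E' →ₗc[k] ↥E, i.comp h' = h := by
  have hE_sub : IsSubcoalgebra E := hE ▸ isSubcoalgebra_sSup fun _ hV => hV.1
  have hE_ker : E ≤ ker (f.toLinearMap - g.toLinearMap) := hE ▸ sSup_le fun _ hV => hV.2
  obtain ⟨inst, i, hi⟩ := hE_sub.exists_coalgHom_subtype
  have hi_inj : Function.Injective i := by
    rw [← CoalgHom.coe_toLinearMap, ← CoalgHom.toLinearMap_eq_coe, hi]
    exact E.injective_subtype
  refine ⟨inst, i, hi, ?_, fun E' _ _ _ h hfg => i.existsUnique_comp_eq_of_injective hi_inj h ?_⟩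
  · ext x
    change f (i.toLinearMap x) = g (i.toLinearMap x)
    rw [hi]
    simpa [sub_eq_zero] using hE_ker x.2
  · rw [hi, Submodule.range_subtype, hE]
    refine le_sSup ⟨h.isSubcoalgebra_range, ?_⟩
    rw [range_le_ker_iff, sub_comp, sub_eq_zero]
    exact congrArg CoalgHom.toLinearMap hfg
end

section
/- The category of coalgebras over a field k has equalizers of all pairs of parallel morphisms. -/
/-!
Over a field every module is flat, so for a submodule `C` of a coalgebra `A` the maps
`C ⊗ C → A ⊗ A` and `C ⊗ C ⊗ C → A ⊗ A ⊗ A` are injective. Hence if `Δ C ⊆ C ⊗ C`, then `Δ`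
restricts to `C` and the coalgebra axioms for `C` follow from those of `A`. Subcoalgebras are
closed under arbitrary sums, so every submodule `N` contains a largest subcoalgebra. The equalizer
of `f g : A → B` is the largest subcoalgebra of `A` inside `{x | f x = g x}`: a coalgebra map
`t` with `f ∘ t = g ∘ t` has as image a subcoalgebra inside that locus, so it factors through it.
-/

universe u v

open Coalgebra LinearMap TensorProduct

namespace Coalgebra

variable {R A C : Type*} [CommSemiring R] [AddCommMonoid A] [Module R A] [AddCommMonoid C]
  [Module R C] [Coalgebra R A] [CoalgebraStruct R C]

abbrev ofInjective (i : C →ₗ[R] A) (hcomul : map i i ∘ₗ comul = comul ∘ₗ i)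
    (hcounit : counit ∘ₗ i = counit) (hi₃ : Function.Injective (map i (map i i)))
    (hl : Function.Injective (i.lTensor R)) (hr : Function.Injective (i.rTensor R)) :
    Coalgebra R C :=
  have hcomul_apply (x : C) : map i i (comul x) = comul (i x) := congr($hcomul x)
  { coassoc := LinearMap.ext fun x => hi₃ <| by
      simp only [comp_apply, LinearEquiv.coe_coe, map_map_assoc, map_rTensor, map_lTensor,
        hcomul, ← rTensor_map, ← lTensor_map, hcomul_apply, coassoc_apply]
    rTensor_counit_comp_comul := LinearMap.ext fun x => hl <| by
      rw [comp_apply, ← comp_apply (lTensor R i), lTensor_comp_rTensor, ← hcounit,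
        ← rTensor_map, hcomul_apply]
      simp
    lTensor_counit_comp_comul := LinearMap.ext fun x => hr <| by
      rw [comp_apply, ← comp_apply (rTensor R i), rTensor_comp_lTensor, ← hcounit,
        ← lTensor_map, hcomul_apply]
      simp }

end Coalgebra

namespace Submodule

variable {R A : Type*} [CommSemiring R] [AddCommMonoid A] [Module R A]

class IsSubcoalgebra [CoalgebraStruct R A] (C : Submodule R A) : Prop where
  comul_mem : ∀ x ∈ C, comul x ∈ range (mapIncl C C)

section CoalgebraStruct

variable [CoalgebraStruct R A]

lemma isSubcoalgebra_sSup {S : Set (Submodule R A)} (hS : ∀ C ∈ S, C.IsSubcoalgebra) :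
    (sSup S).IsSubcoalgebra where
  comul_mem := show sSup S ≤ (range (mapIncl (sSup S) (sSup S))).comap comul from
    sSup_le fun C hC x hx =>
      range_mapIncl_mono (le_sSup hC) (le_sSup hC) ((hS C hC).comul_mem x hx)

lemma isSubcoalgebra_range {T : Type*} [AddCommMonoid T] [Module R T] [CoalgebraStruct R T]
    (t : T →ₗc[R] A) : (range (t : T →ₗ[R] A)).IsSubcoalgebra where
  comul_mem := by
    rintro _ ⟨y, rfl⟩
    rw [range_mapIncl, ← range_map]
    exact ⟨comul y, CoalgHomClass.map_comp_comul_apply t y⟩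

def maxSubcoalgebra (N : Submodule R A) : Submodule R A :=
  sSup {C | C.IsSubcoalgebra ∧ C ≤ N}

variable {N : Submodule R A}

instance : (maxSubcoalgebra N).IsSubcoalgebra :=
  isSubcoalgebra_sSup fun _ hC => hC.1

lemma maxSubcoalgebra_le : maxSubcoalgebra N ≤ N :=
  sSup_le fun _ hC => hC.2

lemma le_maxSubcoalgebra {C : Submodule R A} (hC : C.IsSubcoalgebra) (h : C ≤ N) :
    C ≤ maxSubcoalgebra N :=
  le_sSup ⟨hC, h⟩

end CoalgebraStruct

variable [Module.Flat R A] (C : Submodule R A) [Module.Flat R C]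

lemma mapIncl_injective : Function.Injective (mapIncl C C) :=
  map_injective_of_flat_flat _ _ C.injective_subtype C.injective_subtype

variable [Coalgebra R A] [C.IsSubcoalgebra]

noncomputable instance : CoalgebraStruct R C where
  comul := codRestrictOfInjective (comul ∘ₗ C.subtype) (mapIncl C C) (mapIncl_injective C)
    fun x => IsSubcoalgebra.comul_mem (C := C) x.1 x.2
  counit := counit ∘ₗ C.subtype

lemma mapIncl_comp_comul : mapIncl C C ∘ₗ comul = comul ∘ₗ C.subtype :=
  codRestrictOfInjective_comp (comul ∘ₗ C.subtype) _ _ _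

noncomputable instance : Coalgebra R C :=
  Coalgebra.ofInjective C.subtype (mapIncl_comp_comul C) rfl
    (map_injective_of_flat_flat' _ _ C.injective_subtype (mapIncl_injective C))
    (Module.Flat.lTensor_preserves_injective_linearMap _ C.injective_subtype)
    (Module.Flat.rTensor_preserves_injective_linearMap _ C.injective_subtype)

noncomputable def subtypeCoalgHom : C →ₗc[R] A where
  __ := C.subtype
  counit_comp := rfl
  map_comp_comul := mapIncl_comp_comul C

end Submodule

namespace CoalgHom

variable {R A T : Type*} [CommSemiring R] [AddCommMonoid A] [Module R A] [Coalgebra R A]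
  [Module.Flat R A] [AddCommMonoid T] [Module R T] [CoalgebraStruct R T]
  (C : Submodule R A) [Module.Flat R C] [C.IsSubcoalgebra]

noncomputable def codRestrict (t : T →ₗc[R] A) (h : range (t : T →ₗ[R] A) ≤ C) :
    T →ₗc[R] C where
  __ := (t : T →ₗ[R] A).codRestrict C fun y => h (mem_range_self _ y)
  counit_comp := LinearMap.ext (CoalgHomClass.counit_comp_apply t)
  map_comp_comul := LinearMap.ext fun y => C.mapIncl_injective <| by
    simp only [LinearMap.comp_apply, map_map, subtype_comp_codRestrict]
    rw [← LinearMap.comp_apply (mapIncl C C), C.mapIncl_comp_comul]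
    exact CoalgHomClass.map_comp_comul_apply t y

end CoalgHom

namespace CoalgCat

open CategoryTheory Limits Submodule

variable {k : Type u} [Field k] {X Y : CoalgCat.{v} k} (f g : X ⟶ Y)

abbrev equalizerSubcoalgebra : Submodule k X :=
  maxSubcoalgebra (eqLocus (f.toCoalgHom : X →ₗ[k] Y) g.toCoalgHom)

noncomputable def equalizerFork : Fork f g :=
  Fork.ofι (P := of k (equalizerSubcoalgebra f g))
    ⟨(equalizerSubcoalgebra f g).subtypeCoalgHom⟩ <| by
      ext x
      exact maxSubcoalgebra_le x.2

noncomputable def isLimitEqualizerFork : IsLimit (equalizerFork f g) :=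
  Fork.IsLimit.mk' _ fun s =>
    have hs : range (s.ι.toCoalgHom : s.pt →ₗ[k] X) ≤ equalizerSubcoalgebra f g := by
      refine le_maxSubcoalgebra (isSubcoalgebra_range _) ?_
      rintro _ ⟨y, rfl⟩
      exact CoalgHom.congr_fun congr(Hom.toCoalgHom $s.condition) y
    ⟨⟨CoalgHom.codRestrict _ s.ι.toCoalgHom hs⟩, rfl, fun hm => by
      ext y
      exact Subtype.ext congr(Hom.toCoalgHom $hm y)⟩

end CoalgCat

open CategoryTheory CategoryTheory.Limits

/-- The category of coalgebras over a field `k` has equalizers of all pairs of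
parallel morphisms. -/
theorem CoalgebraCat.hasEqualizers (k : Type u) [Field k] :
    HasEqualizers (CoalgCat.{v} k) :=
  have {X Y : CoalgCat.{v} k} {f g : X ⟶ Y} : HasLimit (parallelPair f g) :=
    HasLimit.mk ⟨_, CoalgCat.isLimitEqualizerFork f g⟩
  hasEqualizers_of_hasLimit_parallelPair _
end

section
/- Let k be a field and f, g : H → K two morphisms of k-Hopf algebras. Set S := {h ∈ H | f(h) = g(h)} and let D be the sum of all subcoalgebras of H contained in S. Then D is a Hopf subalgebra of H: it is a subbialgebra of H and is stable under the antipode of H. -/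
/-!
Both facts about the antipode `S` that the argument needs come from uniqueness of convolution
inverses: for a Hopf morphism `f`, both `f ∘ S` and `S ∘ f` are inverse to `f`; and `Δ ∘ S` and
`(S ⊗ S) ∘ τ ∘ Δ` are both inverse to `Δ`, the latter because in the convolution algebra
`Hom(H, H ⊗ H)` we have `Δ = ι₁ * ι₂` and `(S ⊗ S) ∘ τ ∘ Δ = (ι₂ ∘ S) * (ι₁ ∘ S)`, while
`ι ∘ S` is inverse to `ι` for every algebra map `ι`. Hence `S` preserves `{h | f h = g h}`,
which is also a subalgebra, and maps subcoalgebras to subcoalgebras; and since `Δ` is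
multiplicative, products of subcoalgebras are subcoalgebras. So `k ∙ 1`, `D * D` and `S(D)` are
subcoalgebras inside the equalizer, hence inside `D`.
-/

universe u v

open TensorProduct Coalgebra WithConv HopfAlgebra

namespace LinearMap

variable {R A B C : Type*} [CommSemiring R]

lemma algHom_comp_antipode_convMul [Semiring A] [HopfAlgebra R A] [Semiring B] [Algebra R B]
    (h : A →ₐ[R] B) : toConv (h.toLinearMap ∘ₗ antipode R) * toConv h.toLinearMap = 1 :=
  calc toConv (h.toLinearMap ∘ₗ antipode R) * toConv h.toLinearMap
      = toConv (h.toLinearMap ∘ₗ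
          (toConv (antipode R) * toConv id : WithConv (A →ₗ[R] A)).ofConv) := by
        rw [algHom_comp_convMul_distrib]; rfl
    _ = 1 := by rw [antipode_mul_id]; ext; simp

lemma coalgHom_convMul_antipode_comp [AddCommMonoid C] [Module R C] [Coalgebra R C]
    [Semiring A] [HopfAlgebra R A] (f : C →ₗc[R] A) :
    toConv f.toLinearMap * toConv (antipode R ∘ₗ f.toLinearMap) = 1 :=
  calc toConv f.toLinearMap * toConv (antipode R ∘ₗ f.toLinearMap)
      = toConv ((toConv id * toConv (antipode R) : WithConv (A →ₗ[R] A)).ofConv ∘ₗ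
          f.toLinearMap) := by
        rw [convMul_comp_coalgHom_distrib]; rfl
    _ = 1 := by rw [id_mul_antipode]; ext; simp

section Tensor

variable [Semiring A] [Algebra R A] [Semiring B] [Algebra R B]
  [AddCommMonoid C] [Module R C] [CoalgebraStruct R C]

open Algebra.TensorProduct

lemma includeLeft_comp_convMul_includeRight_comp (φ : C →ₗ[R] A) (ψ : C →ₗ[R] B) :
    toConv ((includeLeft : A →ₐ[R] A ⊗[R] B).toLinearMap ∘ₗ φ) *
        toConv ((includeRight : B →ₐ[R] A ⊗[R] B).toLinearMap ∘ₗ ψ) =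
      toConv (map φ ψ ∘ₗ comul) := by
  ext c
  rw [convMul_apply, ofConv_toConv, ofConv_toConv, comp_apply]
  induction comul (R := R) c using TensorProduct.induction_on with
  | zero => simp
  | tmul a b => simp
  | add x y hx hy => simp_all

lemma includeRight_comp_convMul_includeLeft_comp (φ : C →ₗ[R] B) (ψ : C →ₗ[R] A) :
    toConv ((includeRight : B →ₐ[R] A ⊗[R] B).toLinearMap ∘ₗ φ) *
        toConv ((includeLeft : A →ₐ[R] A ⊗[R] B).toLinearMap ∘ₗ ψ) =
      toConv (map ψ φ ∘ₗ TensorProduct.comm R C C ∘ₗ comul) := by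
  ext c
  rw [convMul_apply, ofConv_toConv, ofConv_toConv, comp_apply, comp_apply]
  induction comul (R := R) c using TensorProduct.induction_on with
  | zero => simp
  | tmul a b => simp
  | add x y hx hy => simp_all

end Tensor

end LinearMap

namespace BialgHom

variable {R H K : Type*} [CommSemiring R] [Semiring H] [HopfAlgebra R H] [Semiring K]
  [HopfAlgebra R K]

lemma comp_antipode (f : H →ₐc[R] K) :
    f.toLinearMap ∘ₗ antipode R = antipode R ∘ₗ f.toLinearMap :=
  congrArg ofConv <| left_inv_eq_right_inv
    (LinearMap.algHom_comp_antipode_convMul (f : H →ₐ[R] K))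
    (LinearMap.coalgHom_convMul_antipode_comp (f : H →ₗc[R] K))

lemma map_antipode (f : H →ₐc[R] K) (x : H) : f (antipode R x) = antipode R (f x) :=
  LinearMap.congr_fun f.comp_antipode x

end BialgHom

namespace HopfAlgebra

variable {R H : Type*} [CommSemiring R] [Semiring H] [HopfAlgebra R H]

open Algebra.TensorProduct LinearMap in
lemma comul_comp_antipode :
    comul (A := H) ∘ₗ antipode R =
      map (antipode R) (antipode R) ∘ₗ (TensorProduct.comm R H H).toLinearMap ∘ₗ comul := by
  set iL := (includeLeft : H →ₐ[R] H ⊗[R] H).toLinearMap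
  set iR := (includeRight : H →ₐ[R] H ⊗[R] H).toLinearMap
  set G := map (antipode R) (antipode R) ∘ₗ (TensorProduct.comm R H H).toLinearMap ∘ₗ comul
  have hG : toConv G = toConv (iR ∘ₗ antipode R) * toConv (iL ∘ₗ antipode R) :=
    (includeRight_comp_convMul_includeLeft_comp _ _).symm
  have hδ : toConv (comul (R := R) (A := H)) = toConv iL * toConv iR := by
    have := includeLeft_comp_convMul_includeRight_comp (R := R) (id : H →ₗ[R] H) id
    rwa [comp_id, comp_id, TensorProduct.map_id, id_comp, eq_comm] at this
  have hG_mul_δ : toConv G * toConv comul = 1 := by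
    rw [hG, hδ, mul_assoc, ← mul_assoc (toConv (iL ∘ₗ _)), algHom_comp_antipode_convMul, one_mul,
      algHom_comp_antipode_convMul]
  exact (congrArg ofConv (left_inv_eq_right_inv hG_mul_δ comul_right_inv)).symm

end HopfAlgebra

namespace Submodule

variable {R A B : Type*} [CommSemiring R] [Semiring A] [Algebra R A] [Semiring B] [Algebra R B]

lemma map₂_mk_mul_map₂_mk_le (V₁ W₁ : Submodule R A) (V₂ W₂ : Submodule R B) :
    map₂ (TensorProduct.mk R A B) V₁ V₂ * map₂ (TensorProduct.mk R A B) W₁ W₂ ≤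
      map₂ (TensorProduct.mk R A B) (V₁ * W₁) (V₂ * W₂) := by
  set X := map₂ (TensorProduct.mk R A B) (V₁ * W₁) (V₂ * W₂)
  refine mul_le.mpr fun s hs t ht => ?_
  suffices map₂ (TensorProduct.mk R A B) V₁ V₂ ≤ X.comap (LinearMap.mulRight R t) from this hs
  refine map₂_le.mpr fun a ha b hb => ?_
  suffices map₂ (TensorProduct.mk R A B) W₁ W₂ ≤ X.comap (LinearMap.mulLeft R (a ⊗ₜ b)) from this ht
  refine map₂_le.mpr fun c hc d hd => ?_
  simpa [Algebra.TensorProduct.tmul_mul_tmul] using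
    apply_mem_map₂ (TensorProduct.mk R A B) (mul_mem_mul ha hc) (mul_mem_mul hb hd)

end Submodule

section Subcoalgebra

variable {k C : Type*} [CommRing k] [AddCommGroup C] [Module k C] [Coalgebra k C]

lemma isSubcoalgebra_iff_le_comap (V : Submodule k C) :
    IsSubcoalgebra V ↔ V ≤ (Submodule.map₂ (mk k C C) V V).comap comul := by
  simp only [IsSubcoalgebra, ← range_mapIncl]
  rfl

lemma IsSubcoalgebra.sSup {𝒮 : Set (Submodule k C)} (h𝒮 : ∀ V ∈ 𝒮, IsSubcoalgebra V) :
    IsSubcoalgebra (sSup 𝒮) := by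
  rw [isSubcoalgebra_iff_le_comap]
  refine sSup_le fun V hV => ((isSubcoalgebra_iff_le_comap V).mp (h𝒮 V hV)).trans ?_
  exact Submodule.comap_mono (Submodule.map₂_le_map₂ (le_sSup hV) (le_sSup hV))

lemma IsGroupLikeElem.isSubcoalgebra_span {a : C} (ha : IsGroupLikeElem k a) :
    IsSubcoalgebra (k ∙ a) := by
  rw [isSubcoalgebra_iff_le_comap, Submodule.span_singleton_le_iff_mem, Submodule.mem_comap,
    ha.comul_eq_tmul_self]
  exact Submodule.apply_mem_map₂ _ (Submodule.mem_span_singleton_self a)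
    (Submodule.mem_span_singleton_self a)

lemma IsSubcoalgebra.mul {A : Type*} [Ring A] [Bialgebra k A] {V W : Submodule k A}
    (hV : IsSubcoalgebra V) (hW : IsSubcoalgebra W) : IsSubcoalgebra (V * W) := by
  rw [isSubcoalgebra_iff_le_comap] at *
  refine Submodule.mul_le.mpr fun v hv w hw => ?_
  rw [Submodule.mem_comap, Bialgebra.comul_mul]
  exact Submodule.map₂_mk_mul_map₂_mk_le V W V W (Submodule.mul_mem_mul (hV hv) (hW hw))

lemma IsSubcoalgebra.map_antipode {H : Type*} [Ring H] [HopfAlgebra k H] {V : Submodule k H}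
    (hV : IsSubcoalgebra V) : IsSubcoalgebra (V.map (antipode k)) := by
  rw [isSubcoalgebra_iff_le_comap] at *
  rw [Submodule.map_le_iff_le_comap, ← Submodule.comap_comp, comul_comp_antipode,
    Submodule.comap_comp, Submodule.comap_comp]
  refine hV.trans (Submodule.comap_mono (Submodule.map₂_le.mpr fun a ha b hb => ?_))
  simpa using Submodule.apply_mem_map₂ (mk k H H) (Submodule.mem_map_of_mem hb)
    (Submodule.mem_map_of_mem ha)

end Subcoalgebra

/-- Let `f, g : H → K` be morphisms of Hopf algebras and let `D` be the sum of all
subcoalgebras of `H` contained in `S = {h | f h = g h}`.  Then `D` is a Hopf subalgebra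
of `H`: it is a subcoalgebra, contains `1`, is closed under multiplication, and is
stable under the antipode of `H`. -/
theorem sum_of_subcoalgebras_is_hopf_subalgebra {k : Type u} [Field k] {H K : Type v}
    [Ring H] [Ring K] [HopfAlgebra k H] [HopfAlgebra k K]
    (f g : H →ₐc[k] K) (D : Submodule k H)
    (hD : D = sSup {V : Submodule k H | IsSubcoalgebra V ∧
      V ≤ LinearMap.ker (f.toCoalgHom.toLinearMap - g.toCoalgHom.toLinearMap)}) :
    IsSubcoalgebra D ∧ (1 : H) ∈ D ∧ (∀ x ∈ D, ∀ y ∈ D, x * y ∈ D) ∧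
      ∀ x ∈ D, HopfAlgebra.antipode (R := k) x ∈ D := by
  set E := LinearMap.ker (f.toCoalgHom.toLinearMap - g.toCoalgHom.toLinearMap)
  have mem_E (x : H) : x ∈ E ↔ f x = g x := by simp [E, sub_eq_zero]; rfl
  have hDE : D ≤ E := hD ▸ sSup_le fun _ hV => hV.2
  have le_D {V : Submodule k H} (hV : IsSubcoalgebra V) (hVE : V ≤ E) : V ≤ D :=
    hD ▸ le_sSup ⟨hV, hVE⟩
  have hD_sub : IsSubcoalgebra D := hD ▸ IsSubcoalgebra.sSup fun _ hV => hV.1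
  refine ⟨hD_sub, ?_, fun x hx y hy => ?_, fun x hx => ?_⟩
  · refine le_D IsGroupLikeElem.one.isSubcoalgebra_span ?_ (Submodule.mem_span_singleton_self 1)
    simp [Submodule.span_singleton_le_iff_mem, mem_E]
  · refine le_D (hD_sub.mul hD_sub) (Submodule.mul_le.mpr fun a ha b hb => ?_)
      (Submodule.mul_mem_mul hx hy)
    rw [mem_E, map_mul, map_mul, (mem_E a).mp (hDE ha), (mem_E b).mp (hDE hb)]
  · refine le_D hD_sub.map_antipode ?_ (Submodule.mem_map_of_mem hx)
    rintro _ ⟨a, ha, rfl⟩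
    rw [mem_E, BialgHom.map_antipode, BialgHom.map_antipode, (mem_E a).mp (hDE ha)]
end
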